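/- Let q > 1 and let a be a dominant ordered q-increasing (d+1)-dimensional sequence of length n. Let S be a nonempty subset of {1,...,d} and let τ ∈ S be the ⊢-greatest element of S (that is, s ⊢ τ for every s ∈ S with s ≠ τ). Suppose for every s ∈ S integers i_s, j_s ∈ {1,...,n} are given such that |i_τ - j_τ| ≥ |S|, and i_s ≤ i_t and j_s ≤ j_t whenever s < t with s,t ∈ S. Then Π_{s ∈ S} f_a(s, i_s, j_s) > q if i_τ < j_τ, and Π_{s ∈ S} f_a(s, i_s, j_s) < 1/q if i_τ > j_τ. -/

import Mathlib

/-- A `(d+1)`-dimensional sequence is ordered `q`-increasing: every coordinate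
sequence is positive and for every `t` the sequence of ratios of the `(t+1)`-st
to the `t`-th coordinate sequence is `q`-increasing. -/
def OrdQInc (q : ℝ) {d n : ℕ} (a : Fin n → Fin (d + 1) → ℝ) : Prop :=
  (∀ i t, 0 < a i t) ∧
  ∀ t : Fin d, ∀ i : Fin n, ∀ h : (i : ℕ) + 1 < n,
    a ⟨(i : ℕ) + 1, h⟩ t.succ / a ⟨(i : ℕ) + 1, h⟩ t.castSucc >
      q * (a i t.succ / a i t.castSucc)

/-- `fseq a t i j` is the increase `f_a(t,i,j)` of the ratio of the `(t+1)`-st and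
`t`-th coordinate sequences from position `i` to position `j`. -/
noncomputable def fseq {d n : ℕ} (a : Fin n → Fin (d + 1) → ℝ) (t : Fin d) (i j : Fin n) : ℝ :=
  (a j t.succ * a i t.castSucc) / (a j t.castSucc * a i t.succ)

/-- `a` is left-dominant: for each pair of distinct `s,t`, the position of
`f_a(t,i,j)/f_a(s,j,k)` relative to the interval `[1/q, q]` is the same for all
triples `i < j < k`. -/
def LeftDominant (q : ℝ) {d n : ℕ} (a : Fin n → Fin (d + 1) → ℝ) : Prop :=
  ∀ s t : Fin d, s ≠ t →
    (∀ i j k : Fin n, i < j → j < k → fseq a t i j / fseq a s j k < 1 / q) ∨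
    (∀ i j k : Fin n, i < j → j < k → fseq a t i j / fseq a s j k ∈ Set.Icc (1 / q) q) ∨
    (∀ i j k : Fin n, i < j → j < k → q < fseq a t i j / fseq a s j k)

/-- `a` is right-dominant: for each pair of distinct `s,t`, the position of
`f_a(t,j,k)/f_a(s,i,j)` relative to the interval `[1/q, q]` is the same for all
triples `i < j < k`. -/
def RightDominant (q : ℝ) {d n : ℕ} (a : Fin n → Fin (d + 1) → ℝ) : Prop :=
  ∀ s t : Fin d, s ≠ t →
    (∀ i j k : Fin n, i < j → j < k → fseq a t j k / fseq a s i j < 1 / q) ∨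
    (∀ i j k : Fin n, i < j → j < k → fseq a t j k / fseq a s i j ∈ Set.Icc (1 / q) q) ∨
    (∀ i j k : Fin n, i < j → j < k → q < fseq a t j k / fseq a s i j)

/-- The relation `t ≺ s`: for all `i < j < k`, `q·f_a(t,j,k) < f_a(s,i,j)` and
`q·f_a(t,i,j) < f_a(s,j,k)`. -/
def Prec (q : ℝ) {d n : ℕ} (a : Fin n → Fin (d + 1) → ℝ) (t s : Fin d) : Prop :=
  t ≠ s ∧ ∀ i j k : Fin n, i < j → j < k →
    q * fseq a t j k < fseq a s i j ∧ q * fseq a t i j < fseq a s j k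

/-- The relation `t ∼_l s` (left similar): for all `i < j < k`,
`f_a(t,i,j) > q·f_a(s,j,k)` and `f_a(s,i,j) > q·f_a(t,j,k)`. -/
def SimL (q : ℝ) {d n : ℕ} (a : Fin n → Fin (d + 1) → ℝ) (t s : Fin d) : Prop :=
  t ≠ s ∧ ∀ i j k : Fin n, i < j → j < k →
    fseq a t i j > q * fseq a s j k ∧ fseq a s i j > q * fseq a t j k

/-- The relation `t ∼_r s` (right similar): for all `i < j < k`,
`f_a(t,j,k) > q·f_a(s,i,j)` and `f_a(s,j,k) > q·f_a(t,i,j)`. -/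
def SimR (q : ℝ) {d n : ℕ} (a : Fin n → Fin (d + 1) → ℝ) (t s : Fin d) : Prop :=
  t ≠ s ∧ ∀ i j k : Fin n, i < j → j < k →
    fseq a t j k > q * fseq a s i j ∧ fseq a s j k > q * fseq a t i j

/-- The relation `t ∼ s`: `t = s`, or `t ∼_l s`, or `t ∼_r s`. -/
def Sim (q : ℝ) {d n : ℕ} (a : Fin n → Fin (d + 1) → ℝ) (t s : Fin d) : Prop :=
  t = s ∨ SimL q a t s ∨ SimR q a t s

/-- The relation `t ⊢ s`: `t ≺ s`, or (`t ∼_r s` and `t < s`), or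
(`t ∼_l s` and `t > s`). -/
def Vdash (q : ℝ) {d n : ℕ} (a : Fin n → Fin (d + 1) → ℝ) (t s : Fin d) : Prop :=
  Prec q a t s ∨ (SimR q a t s ∧ t < s) ∨ (SimL q a t s ∧ s < t)

/-!
Write `F_s = f_a(s, i_s, j_s)` and suppose `i_τ < j_τ`; the other case is this one for the
swapped indices, since `f_a(s, j, i) = f_a(s, i, j)⁻¹`. Each `f_a(t, ·, ·)` is a multiplicative
cocycle which exceeds `q` on every increasing pair, so the factors with `i_s ≤ j_s` are at least
`1`. For `s ≠ τ` with `j_s < i_s`, the relation `s ⊢ τ` together with the monotonicity of the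
indices gives `f_a(s, j_s, i_s) < f_a(τ, u, v)`, i.e. `F_s · f_a(τ, u, v) > 1`, for all
`i_τ ≤ u < v ≤ j_τ`. There are fewer than `|S| ≤ j_τ - i_τ` such `s`, so cutting `[i_τ, j_τ]`
into unit steps lets each of them absorb one step of `F_τ`, and a step contributing more than
`q` is left over.
-/

open Finset

theorem mul_apply_lt_apply_of_lt {q : ℝ} (hq : 1 ≤ q) {n : ℕ} {r : Fin n → ℝ}
    (hr : ∀ i, 0 < r i) (hstep : ∀ (i : Fin n) (h : (i : ℕ) + 1 < n), q * r i < r ⟨i + 1, h⟩)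
    {i j : Fin n} (hij : i < j) : q * r i < r j := by
  obtain ⟨m, hm⟩ := j
  rw [Fin.mk_lt_mk] at hij
  induction m, hij using Nat.le_induction with
  | base => exact hstep i hm
  | succ m hle ih =>
    calc q * r i < r ⟨m, by omega⟩ := ih (by omega)
      _ ≤ q * r ⟨m, by omega⟩ := le_mul_of_one_le_left (hr _).le hq
      _ < r ⟨m + 1, hm⟩ := hstep ⟨m, by omega⟩ hm

theorem lt_prod_mul_of_card_lt {ι : Type*} {q : ℝ} (hq : 0 ≤ q) {n : ℕ}
    {φ : Fin n → Fin n → ℝ} (hφ : ∀ u v w, φ u v * φ v w = φ u w)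
    (hφq : ∀ u v, u < v → q < φ u v) (g : ι → ℝ) (B : Finset ι) {x y : Fin n}
    (hB : #B < (y : ℕ) - x) (hg : ∀ s ∈ B, ∀ u v, x ≤ u → u < v → v ≤ y → 1 ≤ g s * φ u v) :
    q < (∏ s ∈ B, g s) * φ x y := by
  classical
  induction B using Finset.induction_on generalizing x with
  | empty => simpa using hφq x y (Fin.lt_def.mpr (by simp at hB; omega))
  | insert s B hs ih =>
    rw [card_insert_of_notMem hs] at hB
    let x' : Fin n := ⟨x + 1, by omega⟩
    have hxx' : x < x' := Fin.lt_def.mpr (Nat.lt_succ_self _)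
    have hrest : q < (∏ t ∈ B, g t) * φ x' y :=
      ih (by simp only [x']; omega) fun t ht u v hu huv hv =>
        hg t (mem_insert_of_mem ht) u v (hxx'.le.trans hu) huv hv
    have hfirst : 1 ≤ g s * φ x x' :=
      hg s (mem_insert_self s B) x x' le_rfl hxx' (Fin.le_def.mpr (by simp only [x']; omega))
    calc q < (∏ t ∈ B, g t) * φ x' y := hrest
      _ ≤ (g s * φ x x') * ((∏ t ∈ B, g t) * φ x' y) := le_mul_of_one_le_left (by linarith) hfirst
      _ = (∏ t ∈ insert s B, g t) * φ x y := by rw [prod_insert hs, ← hφ x x' y]; ring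

section fseq

variable {q : ℝ} {d n : ℕ} {a : Fin n → Fin (d + 1) → ℝ}

theorem fseq_eq_div (t : Fin d) (i j : Fin n) :
    fseq a t i j = (a j t.succ / a j t.castSucc) / (a i t.succ / a i t.castSucc) := by
  simp only [fseq, div_eq_mul_inv, mul_inv, inv_inv]; ring

theorem fseq_swap (t : Fin d) (i j : Fin n) : fseq a t j i = (fseq a t i j)⁻¹ := by
  unfold fseq; rw [inv_div]; ring

theorem fseq_pos (hpos : ∀ i t, 0 < a i t) (t : Fin d) (i j : Fin n) : 0 < fseq a t i j := by
  unfold fseq; exact div_pos (mul_pos (hpos _ _) (hpos _ _)) (mul_pos (hpos _ _) (hpos _ _))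

theorem fseq_self (hpos : ∀ i t, 0 < a i t) (t : Fin d) (i : Fin n) : fseq a t i i = 1 := by
  unfold fseq; rw [mul_comm]; exact div_self (mul_pos (hpos _ _) (hpos _ _)).ne'

theorem fseq_mul_fseq (hpos : ∀ i t, 0 < a i t) (t : Fin d) (i j k : Fin n) :
    fseq a t i j * fseq a t j k = fseq a t i k := by
  have hne : ∀ k u, a k u ≠ 0 := fun k u => (hpos k u).ne'
  unfold fseq
  rw [div_mul_div_comm, div_eq_div_iff (by simp [hne]) (by simp [hne])]
  ring

theorem OrdQInc.lt_fseq (hq : 1 ≤ q) (ha : OrdQInc q a) (t : Fin d) {i j : Fin n} (hij : i < j) :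
    q < fseq a t i j := by
  have hr : ∀ k, 0 < a k t.succ / a k t.castSucc := fun k => div_pos (ha.1 _ _) (ha.1 _ _)
  rw [fseq_eq_div, lt_div_iff₀ (hr i)]
  exact mul_apply_lt_apply_of_lt hq hr (ha.2 t) hij

theorem OrdQInc.one_le_fseq (hq : 1 ≤ q) (ha : OrdQInc q a) (t : Fin d) {i j : Fin n}
    (hij : i ≤ j) : 1 ≤ fseq a t i j := by
  rcases hij.eq_or_lt with rfl | hlt
  · exact (fseq_self ha.1 t i).ge
  · exact hq.trans (ha.lt_fseq hq t hlt).le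

theorem OrdQInc.fseq_le_fseq_right (hq : 1 ≤ q) (ha : OrdQInc q a) (t : Fin d) (i : Fin n)
    {j k : Fin n} (hjk : j ≤ k) : fseq a t i j ≤ fseq a t i k := by
  rw [← fseq_mul_fseq ha.1 t i j k]
  exact le_mul_of_one_le_right (fseq_pos ha.1 t i j).le (ha.one_le_fseq hq t hjk)

theorem OrdQInc.fseq_le_fseq_left (hq : 1 ≤ q) (ha : OrdQInc q a) (t : Fin d) {i j : Fin n}
    (k : Fin n) (hij : i ≤ j) : fseq a t j k ≤ fseq a t i k := by
  rw [← fseq_mul_fseq ha.1 t i j k]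
  exact le_mul_of_one_le_left (fseq_pos ha.1 t j k).le (ha.one_le_fseq hq t hij)

theorem Vdash.fseq_lt_fseq_of_lt (hq : 1 < q) (ha : OrdQInc q a) {s τ : Fin d}
    (h : Vdash q a s τ) (hsτ : s < τ) {x y u v : Fin n} (hxy : x < y) (hyu : y ≤ u)
    (huv : u < v) : fseq a s x y < fseq a τ u v := by
  have hxu := hxy.trans_le hyu
  have key : q * fseq a s x u < fseq a τ u v := by
    rcases h with hp | ⟨hr, -⟩ | ⟨-, hτs⟩
    · exact (hp.2 x u v hxu huv).2
    · exact (hr.2 x u v hxu huv).2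
    · exact absurd hτs hsτ.not_gt
  calc fseq a s x y ≤ fseq a s x u := ha.fseq_le_fseq_right hq.le s x hyu
    _ < q * fseq a s x u := lt_mul_of_one_lt_left (fseq_pos ha.1 s x u) hq
    _ < fseq a τ u v := key

theorem Vdash.fseq_lt_fseq_of_gt (hq : 1 < q) (ha : OrdQInc q a) {s τ : Fin d}
    (h : Vdash q a s τ) (hτs : τ < s) {x y u v : Fin n} (huv : u < v) (hvx : v ≤ x)
    (hxy : x < y) : fseq a s x y < fseq a τ u v := by
  have hvy := hvx.trans_lt hxy
  have key : q * fseq a s v y < fseq a τ u v := by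
    rcases h with hp | ⟨-, hsτ⟩ | ⟨hl, -⟩
    · exact (hp.2 u v y huv hvy).1
    · exact absurd hsτ hτs.not_gt
    · exact (hl.2 u v y huv hvy).2
  calc fseq a s x y ≤ fseq a s v y := ha.fseq_le_fseq_left hq.le s y hvx
    _ < q * fseq a s v y := lt_mul_of_one_lt_left (fseq_pos ha.1 s v y) hq
    _ < fseq a τ u v := key

theorem OrdQInc.lt_prod_fseq (hq : 1 < q) (ha : OrdQInc q a) {S : Finset (Fin d)} {τ : Fin d}
    (hτS : τ ∈ S) (hτmax : ∀ s ∈ S, s ≠ τ → Vdash q a s τ) {i j : Fin d → Fin n}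
    (hgap : #S ≤ (j τ : ℕ) - i τ) (hi : ∀ s ∈ S, s < τ → i s ≤ i τ)
    (hj : ∀ s ∈ S, τ < s → j τ ≤ j s) : q < ∏ s ∈ S, fseq a s (i s) (j s) := by
  classical
  set F : Fin d → ℝ := fun s => fseq a s (i s) (j s)
  set B := (S.erase τ).filter fun s => j s < i s
  set G := (S.erase τ).filter fun s => ¬ j s < i s
  have hbad : ∀ s ∈ B, ∀ u v, i τ ≤ u → u < v → v ≤ j τ → 1 ≤ F s * fseq a τ u v := by
    intro s hs u v hu huv hv
    simp only [B, mem_filter, mem_erase] at hs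
    obtain ⟨⟨hsτ, hsS⟩, hji⟩ := hs
    have hlt : fseq a s (j s) (i s) < fseq a τ u v := by
      rcases hsτ.lt_or_gt with hlt | hgt
      · exact (hτmax s hsS hsτ).fseq_lt_fseq_of_lt hq ha hlt hji ((hi s hsS hlt).trans hu) huv
      · exact (hτmax s hsS hsτ).fseq_lt_fseq_of_gt hq ha hgt huv (hv.trans (hj s hsS hgt)) hji
    rw [show F s = _ from fseq_swap s (j s) (i s)]
    exact (one_le_inv_mul₀ (fseq_pos ha.1 s _ _)).mpr hlt.le
  have hB : #B < (j τ : ℕ) - i τ :=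
    ((card_filter_le _ _).trans_lt (card_erase_lt_of_mem hτS)).trans_le hgap
  have hgood : 1 ≤ ∏ s ∈ G, F s :=
    one_le_prod fun s hs => ha.one_le_fseq hq.le s (not_lt.mp (mem_filter.mp hs).2)
  have hpaired : q < (∏ s ∈ B, F s) * F τ :=
    lt_prod_mul_of_card_lt (by linarith) (fseq_mul_fseq ha.1 τ)
      (fun _ _ => ha.lt_fseq hq.le τ) F B hB hbad
  calc q < (∏ s ∈ B, F s) * F τ := hpaired
    _ ≤ (∏ s ∈ B, F s) * F τ * ∏ s ∈ G, F s :=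
        le_mul_of_one_le_right (by linarith) hgood
    _ = ∏ s ∈ S, F s := by
        rw [mul_right_comm, prod_filter_mul_prod_filter_not, mul_comm, mul_prod_erase S F hτS]

end fseq

theorem crux_lemma_general (q : ℝ) (hq : 1 < q) (d n : ℕ)
    (a : Fin n → Fin (d + 1) → ℝ) (ha : OrdQInc q a)
    (S : Finset (Fin d))
    (τ : Fin d) (hτS : τ ∈ S) (hτmax : ∀ s ∈ S, s ≠ τ → Vdash q a s τ)
    (i j : Fin d → Fin n)
    (hgap : S.card ≤ (((i τ : ℕ) : ℤ) - ((j τ : ℕ) : ℤ)).natAbs)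
    (hmono : ∀ s ∈ S, ∀ t ∈ S, s < t → i s ≤ i t ∧ j s ≤ j t) :
    (i τ < j τ → q < ∏ s ∈ S, fseq a s (i s) (j s)) ∧
    (j τ < i τ → ∏ s ∈ S, fseq a s (i s) (j s) < 1 / q) := by
  refine ⟨fun hij => ha.lt_prod_fseq hq hτS hτmax (by omega)
    (fun s hs h => (hmono s hs τ hτS h).1) (fun s hs h => (hmono τ hτS s hs h).2), fun hji => ?_⟩
  have hswap := ha.lt_prod_fseq hq hτS hτmax (i := j) (j := i) (by omega)
    (fun s hs h => (hmono s hs τ hτS h).2) (fun s hs h => (hmono τ hτS s hs h).1)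
  simp only [fseq_swap _ (i _), prod_inv_distrib] at hswap
  rw [one_div]
  exact (lt_inv_comm₀ (by linarith) (prod_pos fun s _ => fseq_pos ha.1 s _ _)).mp hswap

/-- Key lemma: let `a` be a dominant ordered `q`-increasing `(d+1)`-dimensional
sequence, `S ⊆ {1,...,d}` nonempty, `τ` the `⊢`-greatest element of `S`, and let
indices `i_s, j_s` be given for `s ∈ S` with `|i_τ - j_τ| ≥ |S|` and both families
monotone along `S`.  Then `Π_{s ∈ S} f_a(s, i_s, j_s) > q` if `i_τ < j_τ`, and
`< 1/q` if `i_τ > j_τ`. -/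
theorem crux_lemma (q : ℝ) (hq : 1 < q) (d n : ℕ)
    (a : Fin n → Fin (d + 1) → ℝ) (ha : OrdQInc q a)
    (hld : LeftDominant q a) (hrd : RightDominant q a)
    (S : Finset (Fin d)) (hS : S.Nonempty)
    (τ : Fin d) (hτS : τ ∈ S) (hτmax : ∀ s ∈ S, s ≠ τ → Vdash q a s τ)
    (i j : Fin d → Fin n)
    (hgap : S.card ≤ (((i τ : ℕ) : ℤ) - ((j τ : ℕ) : ℤ)).natAbs)
    (hmono : ∀ s ∈ S, ∀ t ∈ S, s < t → i s ≤ i t ∧ j s ≤ j t) :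
    (i τ < j τ → q < ∏ s ∈ S, fseq a s (i s) (j s)) ∧
    (j τ < i τ → ∏ s ∈ S, fseq a s (i s) (j s) < 1 / q) :=
  crux_lemma_general q hq d n a ha S τ hτS hτmax i j hgap hmono
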